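/- arXiv:1205.4131 — 2 statements merged into one kernel-verified Lean document; each statement's English description precedes it below -/
import Mathlib

section
/- Let F be a real 4×4 matrix that is antisymmetric with respect to the Minkowski metric η = diag(-1,1,1,1) (i.e. F_{ab} + F_{ba} = 0 where indices are lowered with η), and let F̃ be its Hodge dual defined by F̃_{cd} = (1/2) ε_{abcd} F^{ab}. Then F̃_{cd} F^{ce} = (1/4)(F^{ab} F̃_{ab}) δ^e_d. -/
/-!
Raising both indices with a diagonal metric keeps `F` antisymmetric, and the identity holds for
every antisymmetric `4 × 4` matrix. Such a matrix is determined by its six entries above the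
diagonal, its Hodge dual permutes these entries up to sign, and `F̃ᵀ F` is then the Pfaffian
`F⁰¹F²³ - F⁰²F¹³ + F⁰³F¹²` times the identity, which is a direct entrywise computation.
-/

open Matrix

/-- The Minkowski metric η = diag(-1,1,1,1). -/
noncomputable def eta : Matrix (Fin 4) (Fin 4) ℝ := Matrix.diagonal ![-1, 1, 1, 1]

/-- The Levi-Civita symbol on four indices, with `lc 0 1 2 3 = 1`. -/
noncomputable def lc (a b c d : Fin 4) : ℝ :=
  (((a.val : ℝ) - b.val) * ((a.val : ℝ) - c.val) * ((a.val : ℝ) - d.val) *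
    ((b.val : ℝ) - c.val) * ((b.val : ℝ) - d.val) * ((c.val : ℝ) - d.val)) / 12

noncomputable def hodgeDual (G : Matrix (Fin 4) (Fin 4) ℝ) : Matrix (Fin 4) (Fin 4) ℝ :=
  fun c d => (1/2) * ∑ a, ∑ b, lc a b c d * G a b

def skewMatrix4 (p q r s t u : ℝ) : Matrix (Fin 4) (Fin 4) ℝ :=
  !![0, p, q, r; -p, 0, s, t; -q, -s, 0, u; -r, -t, -u, 0]

lemma eq_skewMatrix4 {G : Matrix (Fin 4) (Fin 4) ℝ} (hG : ∀ a b, G a b + G b a = 0) :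
    G = skewMatrix4 (G 0 1) (G 0 2) (G 0 3) (G 1 2) (G 1 3) (G 2 3) := by
  ext a b
  have hab := hG a b
  fin_cases a <;> fin_cases b <;> simp [skewMatrix4] at hab ⊢ <;> linarith

lemma hodgeDual_skewMatrix4 (p q r s t u : ℝ) :
    hodgeDual (skewMatrix4 p q r s t u) = skewMatrix4 u (-t) s r (-q) p := by
  ext c d
  fin_cases c <;> fin_cases d <;>
    simp [hodgeDual, skewMatrix4, Fin.sum_univ_four, lc] <;> ring

theorem hodgeDual_mul_self {G : Matrix (Fin 4) (Fin 4) ℝ} (hG : ∀ a b, G a b + G b a = 0)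
    (d e : Fin 4) :
    ∑ c, hodgeDual G c d * G c e
      = (1/4) * (∑ a, ∑ b, G a b * hodgeDual G a b) * (if d = e then 1 else 0) := by
  rw [eq_skewMatrix4 hG, hodgeDual_skewMatrix4]
  fin_cases d <;> fin_cases e <;> simp [skewMatrix4, Fin.sum_univ_four] <;> ring

/-- If `Fdn` (the matrix with both indices down) is antisymmetric, `Fup` is the matrix with
both indices raised by η, and `Ftilde` is the Hodge dual `F̃_{cd} = (1/2) ε_{abcd} F^{ab}`,
then `F̃_{cd} F^{ce} = (1/4)(F^{ab} F̃_{ab}) δ^e_d`. -/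
theorem stmt0 (Fdn : Matrix (Fin 4) (Fin 4) ℝ)
    (hF : ∀ a b, Fdn a b + Fdn b a = 0)
    (Fup Ftilde : Matrix (Fin 4) (Fin 4) ℝ)
    (hFup : ∀ a b, Fup a b = eta a a * eta b b * Fdn a b)
    (hFt : ∀ c d, Ftilde c d = (1/2) * ∑ a, ∑ b, lc a b c d * Fup a b) :
    ∀ d e, (∑ c, Ftilde c d * Fup c e)
      = (1/4) * (∑ a, ∑ b, Fup a b * Ftilde a b) * (if d = e then 1 else 0) := by
  have hFupA : ∀ a b, Fup a b + Fup b a = 0 := fun a b => by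
    rw [hFup, hFup]; linear_combination (eta a a * eta b b) * hF a b
  obtain rfl : Ftilde = hodgeDual Fup := Matrix.ext hFt
  exact hodgeDual_mul_self hFupA
end

section
/- Let B(α) be the 4×4 matrix with rows (1+α²/2, -α²/2, -α, 0), (α²/2, 1-α²/2, -α, 0), (-α, α, 1, 0), (0,0,0,1), and let L(γ) be the boost matrix with upper-left 2×2 block [[cosh γ, -sinh γ], [-sinh γ, cosh γ]] and identity elsewhere. Then L(γ) · B(α) · L(γ)⁻¹ = B(α e^{-γ}) for all α, γ ∈ ℝ. -/
/-!
The boosts `L γ` form a one-parameter group, so `(L γ)⁻¹ = L (-γ)`, and the theorem reduces to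
the intertwining relation `L γ * B α = B (α e^{-γ}) * L γ`. Writing `cosh γ` and `sinh γ` through
`u = e^γ`, each entry of that relation is a rational identity in `u` and `α`.
-/

open Matrix Real

noncomputable def galileanBoost (a : ℝ) : Matrix (Fin 4) (Fin 4) ℝ :=
  !![1 + a^2/2, -a^2/2, -a, 0;
     a^2/2, 1 - a^2/2, -a, 0;
     -a, a, 1, 0;
     0, 0, 0, 1]

noncomputable def lorentzBoost (g : ℝ) : Matrix (Fin 4) (Fin 4) ℝ :=
  !![cosh g, -sinh g, 0, 0;
     -sinh g, cosh g, 0, 0;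
     0, 0, 1, 0;
     0, 0, 0, 1]

theorem lorentzBoost_mul_lorentzBoost (g h : ℝ) :
    lorentzBoost g * lorentzBoost h = lorentzBoost (g + h) := by
  rw [lorentzBoost, lorentzBoost, lorentzBoost, cosh_add, sinh_add]
  ext i j
  fin_cases i <;> fin_cases j <;>
    simp only [mul_apply, Fin.sum_univ_four, of_apply, cons_val', cons_val_zero, cons_val_one,
      cons_val, cons_val_fin_one, Fin.isValue, Fin.reduceFinMk, Fin.mk_one, Fin.zero_eta] <;>
    ring

theorem lorentzBoost_zero : lorentzBoost 0 = 1 := by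
  ext i j
  fin_cases i <;> fin_cases j <;> simp [lorentzBoost]

theorem inv_lorentzBoost (g : ℝ) : (lorentzBoost g)⁻¹ = lorentzBoost (-g) :=
  inv_eq_right_inv (by rw [lorentzBoost_mul_lorentzBoost, add_neg_cancel, lorentzBoost_zero])

theorem lorentzBoost_mul_galileanBoost (a g : ℝ) :
    lorentzBoost g * galileanBoost a = galileanBoost (a * exp (-g)) * lorentzBoost g := by
  have hexp : exp g ≠ 0 := exp_ne_zero g
  rw [lorentzBoost, galileanBoost, galileanBoost, cosh_eq, sinh_eq, exp_neg]
  ext i j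
  fin_cases i <;> fin_cases j <;>
    simp only [mul_apply, Fin.sum_univ_four, of_apply, cons_val', cons_val_zero, cons_val_one,
      cons_val, cons_val_fin_one, Fin.isValue, Fin.reduceFinMk, Fin.mk_one, Fin.zero_eta] <;>
    field_simp <;> ring

theorem lorentzBoost_conj_galileanBoost (a g : ℝ) :
    lorentzBoost g * galileanBoost a * (lorentzBoost g)⁻¹ = galileanBoost (a * exp (-g)) := by
  rw [lorentzBoost_mul_galileanBoost, inv_lorentzBoost, mul_assoc, lorentzBoost_mul_lorentzBoost,
    add_neg_cancel, lorentzBoost_zero, mul_one]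

/-- Conjugating the Galileian boost B(α) by the boost L(γ) gives B(α e^{-γ}). -/
theorem stmt3 (α γ : ℝ) :
    let Bm : ℝ → Matrix (Fin 4) (Fin 4) ℝ := fun a =>
      !![1 + a^2/2, -a^2/2, -a, 0;
         a^2/2, 1 - a^2/2, -a, 0;
         -a, a, 1, 0;
         0, 0, 0, 1]
    let L : ℝ → Matrix (Fin 4) (Fin 4) ℝ := fun g =>
      !![Real.cosh g, -Real.sinh g, 0, 0;
         -Real.sinh g, Real.cosh g, 0, 0;
         0, 0, 1, 0;
         0, 0, 0, 1]
    L γ * Bm α * (L γ)⁻¹ = Bm (α * Real.exp (-γ)) :=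
  lorentzBoost_conj_galileanBoost α γ
end
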